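/- arXiv:1610.04741 — 5 statements merged into one kernel-verified Lean document; each statement's English description precedes it below -/
import Mathlib

section
/- Under the same hypotheses (strictly increasing gaps on both vertical lines), for every l ≥ 2, every uniformly crossing l-tuple of edges (p_{i₁}q_{j₁},…,p_{i_l}q_{j_l}) — meaning 0 < i₂−i₁ = ⋯ = i_l−i_{l−1} and j₂−j₁ = ⋯ = j_l−j_{l−1} < 0 — forms a cap: consecutive segments intersect in points r₁,…,r_{l−1} with x(r₁) < ⋯ < x(r_{l−1}), and the slopes of the segments are strictly decreasing. -/
/-- Strict monotonicity on an interval from stepwise monotonicity. -/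
lemma mono_gen (m : ℕ) (a : ℕ → ℝ)
    (h : ∀ i, 1 ≤ i → i < m → a i < a (i + 1)) :
    ∀ i j, 1 ≤ i → i < j → j ≤ m → a i < a j := by
  intro i j hi hij hjm
  induction j with
  | zero => omega
  | succ j ih =>
    rcases Nat.lt_or_ge i j with h' | h'
    · exact lt_trans (ih h' (by omega)) (h j (by omega) (by omega))
    · have : i = j := by omega
      subst this
      exact h i hi (by omega)

/-- Gap monotonicity on an interval. -/
lemma gap_gen (m : ℕ) (a : ℕ → ℝ)
    (hg : ∀ i, 1 ≤ i → i + 2 ≤ m → a (i + 1) - a i < a (i + 2) - a (i + 1)) :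
    ∀ i j, 1 ≤ i → i < j → j + 1 ≤ m → a (i + 1) - a i < a (j + 1) - a j := by
  intro i j hi hij hjm
  induction j with
  | zero => omega
  | succ j ih =>
    rcases Nat.lt_or_ge i j with h' | h'
    · have h1 := ih h' (by omega)
      have h2 := hg j (by omega) (by omega)
      have : a (j + 2) = a (j + 1 + 1) := by ring_nf
      linarith [h2, this ▸ h2]
    · have : i = j := by omega
      subst this
      have h2 := hg i hi (by omega)
      have : a (i + 2) = a (i + 1 + 1) := by ring_nf
      linarith [this ▸ h2]

/-- Block-gap monotonicity: shifted blocks of length `s` have larger increments. -/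
lemma shift_gen (m : ℕ) (a : ℕ → ℝ)
    (hg : ∀ i, 1 ≤ i → i + 2 ≤ m → a (i + 1) - a i < a (i + 2) - a (i + 1)) :
    ∀ s, 1 ≤ s → ∀ i j, 1 ≤ i → i < j → j + s ≤ m →
      a (i + s) - a i < a (j + s) - a j := by
  intro s hs
  induction s with
  | zero => omega
  | succ s ih =>
    intro i j hi hij hjm
    rcases Nat.eq_or_lt_of_le hs with h1 | h1
    · have : s = 0 := by omega
      subst this
      exact gap_gen m a hg i j hi hij (by omega)
    · have hs' : 1 ≤ s := by omega
      have h2 := ih hs' i j hi hij (by omega)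
      have h3 := gap_gen m a hg (i + s) (j + s) (by omega) (by omega) (by omega)
      have e1 : i + (s + 1) = i + s + 1 := by omega
      have e2 : j + (s + 1) = j + s + 1 := by omega
      rw [e1, e2]
      linarith

/-- With strictly increasing gaps on both vertical lines, every uniformly crossing `l`-tuple of
edges (for `l ≥ 2`) forms a cap: consecutive segments intersect in points `r 1, …, r (l-1)` with
strictly increasing x-coordinates, and the slopes of the segments are strictly decreasing. -/
theorem stmt7 (m n l : ℕ) (hl : 2 ≤ l) (w : ℝ) (hw : 0 < w) (a b : ℕ → ℝ)
    (hamono : ∀ i, 1 ≤ i → i < m → a i < a (i + 1))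
    (hbmono : ∀ j, 1 ≤ j → j < n → b j < b (j + 1))
    (hagap : ∀ i, 1 ≤ i → i + 2 ≤ m → a (i + 1) - a i < a (i + 2) - a (i + 1))
    (hbgap : ∀ j, 1 ≤ j → j + 2 ≤ n → b (j + 1) - b j < b (j + 2) - b (j + 1))
    (I J : ℕ → ℕ) (s t : ℕ) (hs : 0 < s) (ht : 0 < t)
    (hI1 : 1 ≤ I 1) (hIl : I l ≤ m) (hJl : 1 ≤ J l) (hJ1 : J 1 ≤ n)
    (hIstep : ∀ k, 1 ≤ k → k < l → I (k + 1) = I k + s)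
    (hJstep : ∀ k, 1 ≤ k → k < l → J k = J (k + 1) + t) :
    ∃ r : ℕ → ℝ × ℝ,
      (∀ k, 1 ≤ k → k < l →
        r k ∈ segment ℝ ((0 : ℝ), a (I k)) (w, b (J k)) ∩
          segment ℝ ((0 : ℝ), a (I (k + 1))) (w, b (J (k + 1)))) ∧
      (∀ k, 1 ≤ k → k + 1 < l → (r k).1 < (r (k + 1)).1) ∧
      (∀ k, 1 ≤ k → k < l →
        (b (J (k + 1)) - a (I (k + 1))) / w < (b (J k) - a (I k)) / w) := by
  -- index arithmetic
  have hIadd : ∀ d k, 1 ≤ k → k + d ≤ l → I (k + d) = I k + d * s := by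
    intro d
    induction d with
    | zero => intro k _ _; simp
    | succ d ih =>
      intro k hk hkd
      have e : k + (d + 1) = (k + d) + 1 := by omega
      rw [e, hIstep (k + d) (by omega) (by omega), ih k hk (by omega)]
      ring
  have hJadd : ∀ d k, 1 ≤ k → k + d ≤ l → J k = J (k + d) + d * t := by
    intro d
    induction d with
    | zero => intro k _ _; simp
    | succ d ih =>
      intro k hk hkd
      have e : k + (d + 1) = (k + d) + 1 := by omega
      have h1 := ih k hk (by omega)
      have h2 := hJstep (k + d) (by omega) (by omega)
      rw [h1, h2, e]; ring
  have hIlb : ∀ k, 1 ≤ k → k ≤ l → 1 ≤ I k := by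
    intro k hk hkl
    have := hIadd (k - 1) 1 (by omega) (by omega)
    have e : 1 + (k - 1) = k := by omega
    rw [e] at this
    omega
  have hIub : ∀ k, 1 ≤ k → k ≤ l → I k ≤ m := by
    intro k hk hkl
    have := hIadd (l - k) k hk (by omega)
    have e : k + (l - k) = l := by omega
    rw [e] at this
    omega
  have hJlb : ∀ k, 1 ≤ k → k ≤ l → 1 ≤ J k := by
    intro k hk hkl
    have := hJadd (l - k) k hk (by omega)
    have e : k + (l - k) = l := by omega
    rw [e] at this
    omega
  have hJub : ∀ k, 1 ≤ k → k ≤ l → J k ≤ n := by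
    intro k hk hkl
    have := hJadd (k - 1) 1 (by omega) (by omega)
    have e : 1 + (k - 1) = k := by omega
    rw [e] at this
    omega
  set A : ℕ → ℝ := fun k => a (I (k + 1)) - a (I k) with hAdef
  set B : ℕ → ℝ := fun k => b (J k) - b (J (k + 1)) with hBdef
  have hA : ∀ k, 1 ≤ k → k < l → 0 < A k := by
    intro k hk hkl
    have h := mono_gen m a hamono (I k) (I (k + 1)) (hIlb k hk (by omega))
      (by rw [hIstep k hk hkl]; omega) (hIub (k + 1) (by omega) (by omega))
    simpa [hAdef] using sub_pos.mpr h
  have hB : ∀ k, 1 ≤ k → k < l → 0 < B k := by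
    intro k hk hkl
    have h := mono_gen n b hbmono (J (k + 1)) (J k) (hJlb (k + 1) (by omega) (by omega))
      (by rw [hJstep k hk hkl]; omega) (hJub k hk (by omega))
    simpa [hBdef] using sub_pos.mpr h
  have hAmono : ∀ k, 1 ≤ k → k + 1 < l → A k < A (k + 1) := by
    intro k hk hkl
    have e1 : I (k + 1) = I k + s := hIstep k hk (by omega)
    have e2 : I (k + 2) = I (k + 1) + s := hIstep (k + 1) (by omega) (by omega)
    have h := shift_gen m a hagap s hs (I k) (I (k + 1))
      (hIlb k hk (by omega)) (by omega) (by rw [← e2]; exact hIub (k + 2) (by omega) (by omega))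
    simp only [hAdef]
    have e3 : k + 1 + 1 = k + 2 := by omega
    rw [e3, e1, e2, e1]
    rw [e1] at h
    linarith
  have hBmono : ∀ k, 1 ≤ k → k + 1 < l → B (k + 1) < B k := by
    intro k hk hkl
    have e1 : J k = J (k + 1) + t := hJstep k hk (by omega)
    have e2 : J (k + 1) = J (k + 2) + t := hJstep (k + 1) (by omega) (by omega)
    have h := shift_gen n b hbgap t ht (J (k + 2)) (J (k + 1))
      (hJlb (k + 2) (by omega) (by omega)) (by omega)
      (by rw [← e1]; exact hJub k hk (by omega))
    simp only [hBdef]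
    have e3 : k + 1 + 1 = k + 2 := by omega
    rw [← e2, ← e1] at h
    rw [e3]
    linarith
  refine ⟨fun k => (A k / (A k + B k) * w,
      a (I k) + A k / (A k + B k) * (b (J k) - a (I k))), ?_, ?_, ?_⟩
  · intro k hk hkl
    have hAk := hA k hk hkl
    have hBk := hB k hk hkl
    have hAB : 0 < A k + B k := by linarith
    have hABne : A k + B k ≠ 0 := ne_of_gt hAB
    set τ := A k / (A k + B k) with hτdef
    have hτ0 : 0 ≤ τ := by positivity
    have hτ1 : τ ≤ 1 := by
      rw [hτdef, div_le_one hAB]; linarith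
    constructor
    · refine ⟨1 - τ, τ, by linarith, hτ0, by ring, ?_⟩
      simp only [Prod.smul_mk, Prod.mk_add_mk, smul_eq_mul, Prod.ext_iff]
      exact ⟨by ring, by ring⟩
    · refine ⟨1 - τ, τ, by linarith, hτ0, by ring, ?_⟩
      simp only [Prod.smul_mk, Prod.mk_add_mk, smul_eq_mul, Prod.ext_iff]
      constructor
      · ring
      · have key : τ * (A k + B k) = A k := by
          rw [hτdef]; field_simp
        simp only [hAdef, hBdef] at key
        linarith [key]
  · intro k hk hkl
    have hAk := hA k hk (by omega)
    have hBk := hB k hk (by omega)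
    have hAk1 := hA (k + 1) (by omega) (by omega)
    have hBk1 := hB (k + 1) (by omega) (by omega)
    have hAm := hAmono k hk hkl
    have hBm := hBmono k hk hkl
    simp only
    have h1 : 0 < A k + B k := by linarith
    have h2 : 0 < A (k + 1) + B (k + 1) := by linarith
    have key : A k / (A k + B k) < A (k + 1) / (A (k + 1) + B (k + 1)) := by
      rw [div_lt_div_iff₀ h1 h2]
      nlinarith
    exact mul_lt_mul_of_pos_right key hw
  · intro k hk hkl
    have hAk := hA k hk hkl
    have hBk := hB k hk hkl
    simp only [hAdef, hBdef] at hAk hBk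
    apply div_lt_div_of_pos_right _ hw
    linarith
end

section
/- In the regular bipartite drawing of K_{m,n} (vertices p_i = (0, (i−1)d) for 1 ≤ i ≤ m and q_j = (w, (j−1)h) for 1 ≤ j ≤ n, with w, d, h > 0), all segments p_i q_j with i + j = k + 1, for a fixed k with 1 < k < m + n − 1, pass through a common point, and this point lies on the vertical line x = (d/(d+h))·w. -/
/-! Taking weights `h/(d+h)` on `p_i` and `d/(d+h)` on `q_j`, the point of `p_i q_j` has
coordinates `(d w/(d+h), d h ((i-1)+(j-1))/(d+h))`, which depends only on `i + j`. -/

lemma mem_segment_of_add_eq {w d h a b c : ℝ} (hd : 0 < d) (hh : 0 < h) (habc : a + b = c) :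
    (d / (d + h) * w, d * h * c / (d + h)) ∈ segment ℝ ((0 : ℝ), a * d) (w, b * h) := by
  have hdh : d + h ≠ 0 := by positivity
  refine ⟨h / (d + h), d / (d + h), by positivity, by positivity, by field_simp; ring, ?_⟩
  ext
  · simp only [Prod.fst_add, Prod.smul_fst, smul_eq_mul]
    ring
  · simp only [Prod.snd_add, Prod.smul_snd, smul_eq_mul, ← habc]
    field_simp

theorem stmt8_general (m n k : ℕ)
    (w d h : ℝ) (hd : 0 < d) (hh : 0 < h) :
    ∃ pt : ℝ × ℝ, pt.1 = d / (d + h) * w ∧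
      ∀ i j : ℕ, 1 ≤ i → i ≤ m → 1 ≤ j → j ≤ n → i + j = k + 1 →
        pt ∈ segment ℝ ((0 : ℝ), ((i : ℝ) - 1) * d) (w, ((j : ℝ) - 1) * h) := by
  refine ⟨(d / (d + h) * w, d * h * ((k : ℝ) - 1) / (d + h)), rfl, ?_⟩
  intro i j _ _ _ _ hij
  have hij' : (i : ℝ) + j = k + 1 := by exact_mod_cast hij
  exact mem_segment_of_add_eq hd hh (by linarith)

/-- In the regular bipartite drawing of `K_{m,n}` with vertices `p i = (0, (i-1)d)` and
`q j = (w, (j-1)h)`, all segments `p i q j` of the `k`-th level (`i + j = k + 1`) pass through a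
common point lying on the vertical line `x = (d/(d+h))·w`, for every `1 < k < m + n - 1`. -/
theorem stmt8 (m n k : ℕ) (hm : 1 ≤ m) (hn : 1 ≤ n) (hk1 : 1 < k) (hk2 : k < m + n - 1)
    (w d h : ℝ) (hw : 0 < w) (hd : 0 < d) (hh : 0 < h) :
    ∃ pt : ℝ × ℝ, pt.1 = d / (d + h) * w ∧
      ∀ i j : ℕ, 1 ≤ i → i ≤ m → 1 ≤ j → j ≤ n → i + j = k + 1 →
        pt ∈ segment ℝ ((0 : ℝ), ((i : ℝ) - 1) * d) (w, ((j : ℝ) - 1) * h) :=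
  stmt8_general m n k w d h hd hh
end

section
/- In the regular bipartite drawing of K_{m,n}, if (p_{i₁}q_{j₁},…,p_{i_l}q_{j_l}) is a uniformly crossing l-tuple (i.e., 0 < i₂−i₁ = ⋯ = i_l−i_{l−1} and j₂−j₁ = ⋯ = j_l−j_{l−1} < 0), then the lines supporting all l segments pass through a common point. -/
/-- In the regular bipartite drawing of `K_{m,n}` (vertices `p i = (0,(i-1)d)`,
`q j = (w,(j-1)h)`), if `(p (I 1) q (J 1), …, p (I l) q (J l))` is a uniformly crossing
`l`-tuple, then the lines supporting all `l` segments pass through a common point. -/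
theorem stmt9 (m n l : ℕ) (hl : 2 ≤ l) (w d h : ℝ) (hw : 0 < w) (hd : 0 < d) (hh : 0 < h)
    (I J : ℕ → ℕ) (s t : ℕ) (hs : 0 < s) (ht : 0 < t)
    (hI1 : 1 ≤ I 1) (hIl : I l ≤ m) (hJl : 1 ≤ J l) (hJ1 : J 1 ≤ n)
    (hIstep : ∀ k, 1 ≤ k → k < l → I (k + 1) = I k + s)
    (hJstep : ∀ k, 1 ≤ k → k < l → J k = J (k + 1) + t) :
    ∃ c : ℝ × ℝ, ∀ k, 1 ≤ k → k ≤ l → ∃ τ : ℝ,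
      c = (1 - τ) • (((0 : ℝ), ((I k : ℝ) - 1) * d) : ℝ × ℝ) +
            τ • ((w, ((J k : ℝ) - 1) * h) : ℝ × ℝ) := by
  have key : ∀ k', k' + 1 ≤ l → I (k' + 1) = I 1 + k' * s ∧ J 1 = J (k' + 1) + k' * t := by
    intro k' hkl
    induction k' with
    | zero => simp
    | succ k ih =>
      obtain ⟨hI, hJ⟩ := ih (by omega)
      have hI' := hIstep (k + 1) (by omega) (by omega)
      have hJ' := hJstep (k + 1) (by omega) (by omega)
      rw [Nat.succ_mul, Nat.succ_mul]
      omega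
  have hden : (0:ℝ) < (s:ℝ) * d + (t:ℝ) * h := by
    have hs' : (0:ℝ) < (s:ℝ) := by exact_mod_cast hs
    have ht' : (0:ℝ) < (t:ℝ) := by exact_mod_cast ht
    positivity
  set τ : ℝ := (s:ℝ) * d / ((s:ℝ) * d + (t:ℝ) * h) with hτ
  refine ⟨(τ * w, (1 - τ) * ((I 1 : ℝ) - 1) * d + τ * ((J 1 : ℝ) - 1) * h), ?_⟩
  intro k hk1 hkl
  refine ⟨τ, ?_⟩
  obtain ⟨k', rfl⟩ : ∃ k', k = k' + 1 := ⟨k - 1, by omega⟩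
  obtain ⟨hI, hJ⟩ := key k' hkl
  have hIr : (I (k' + 1) : ℝ) = (I 1 : ℝ) + (k' : ℝ) * s := by rw [hI]; push_cast; ring
  have hJr : (J 1 : ℝ) = (J (k' + 1) : ℝ) + (k' : ℝ) * t := by rw [hJ]; push_cast; ring
  have hne : (s:ℝ) * d + (t:ℝ) * h ≠ 0 := ne_of_gt hden
  ext
  · simp [Prod.smul_def]
  · simp only [Prod.smul_def, Prod.mk_add_mk, smul_eq_mul]
    rw [hIr, hJr, hτ]
    field_simp
    ring
end

section
/- Let n ≥ 2 and let i, k be coprime integers with 1 ≤ i < k ≤ n/2. In the regular bipartite drawing of K_{n,n} with width 1 and unit steps (p_i = (0, i−1), q_j = (1, j−1)), every uniform (i,k)-crossing lies on the vertical line x = i/k and has y-coordinate of the form j/k for some integer j with 0 ≤ j ≤ kn − k; consequently the number of uniform (i,k)-crossings is at most kn. -/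
/-!
Parametrise both segments by their abscissa `x`: on `p a q b` the ordinate is
`(1 - x)(a - 1) + x(b - 1)`, and on the second segment it is larger by `(1 - x) i - x (k - i) = i - x k`.
So the segments meet only at `x = i/k`, with ordinate `j/k` for the integer
`j = (k - i)(a - 1) + i(b - 1)`, which the index bounds confine to `[0, kn - k]`.
-/

/-- `r` is a uniform `(i,k)`-crossing in the regular bipartite drawing of `K_{n,n}` with unit
width and unit steps (`p a = (0, a-1)`, `q b = (1, b-1)`): `r` is an intersection point of two
segments `p a q b` and `p (a+i) q (b+i-k)` with all indices in `{1,…,n}`. -/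
def UnifCross (n i k : ℕ) (r : ℝ × ℝ) : Prop :=
  ∃ a b : ℤ, 1 ≤ a ∧ a + (i : ℤ) ≤ n ∧ (k : ℤ) - i + 1 ≤ b ∧ b ≤ n ∧
    r ∈ segment ℝ ((0 : ℝ), (a : ℝ) - 1) ((1 : ℝ), (b : ℝ) - 1) ∩
      segment ℝ ((0 : ℝ), (a : ℝ) + i - 1) ((1 : ℝ), (b : ℝ) + i - k - 1)

theorem snd_eq_of_mem_segment {u v : ℝ} {r : ℝ × ℝ} (h : r ∈ segment ℝ ((0 : ℝ), u) ((1 : ℝ), v)) :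
    r.2 = (1 - r.1) * u + r.1 * v := by
  obtain ⟨s, t, -, -, hst, rfl⟩ := h
  obtain rfl : s = 1 - t := by linarith
  simp

theorem UnifCross.exists_eq {n i k : ℕ} (hk : 0 < k) {r : ℝ × ℝ} (hr : UnifCross n i k r) :
    ∃ a b : ℤ, 1 ≤ a ∧ a + (i : ℤ) ≤ n ∧ (k : ℤ) - i + 1 ≤ b ∧ b ≤ n ∧
      r = ((i : ℝ) / k, (((k - i) * (a - 1) + i * (b - 1) : ℤ) : ℝ) / k) := by
  obtain ⟨a, b, ha₁, ha₂, hb₁, hb₂, hr₁, hr₂⟩ := hr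
  refine ⟨a, b, ha₁, ha₂, hb₁, hb₂, ?_⟩
  have hk' : (k : ℝ) ≠ 0 := by positivity
  have hx : r.1 = i / k := by
    have := (snd_eq_of_mem_segment hr₁).symm.trans (snd_eq_of_mem_segment hr₂)
    field_simp
    linarith
  ext
  · exact hx
  · rw [snd_eq_of_mem_segment hr₁, hx]
    push_cast
    field_simp

theorem crossing_numerator_mem_Icc {n i k : ℕ} (hik : i ≤ k) {a b : ℤ} (ha₁ : 1 ≤ a)
    (ha₂ : a + (i : ℤ) ≤ n) (hb₁ : (k : ℤ) - i + 1 ≤ b) (hb₂ : b ≤ n) :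
    (k - i) * (a - 1) + i * (b - 1) ∈ Set.Icc (0 : ℤ) (k * n - k) := by
  have hki : (0 : ℤ) ≤ k - i := by omega
  have hi : (0 : ℤ) ≤ i := by positivity
  constructor
  · nlinarith
  · nlinarith [mul_le_mul_of_nonneg_left (show a - 1 ≤ n - i - 1 by omega) hki,
      mul_le_mul_of_nonneg_left (show b - 1 ≤ n - 1 by omega) hi]

theorem ncard_Icc_zero_mul_sub_le (n : ℕ) {k : ℕ} (hk : 0 < k) :
    (Set.Icc (0 : ℤ) (k * n - k)).ncard ≤ k * n := by
  rw [← Finset.coe_Icc, Set.ncard_coe_finset, Int.card_Icc]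
  rcases n.eq_zero_or_pos with rfl | hn
  · omega
  · have := Nat.le_mul_of_pos_right k hn
    omega

theorem setOf_unifCross_subset {n i k : ℕ} (hik : i < k) :
    {r : ℝ × ℝ | UnifCross n i k r} ⊆
      (fun j : ℤ => ((i : ℝ) / k, (j : ℝ) / k)) '' Set.Icc 0 (k * n - k) := by
  intro r hr
  obtain ⟨a, b, ha₁, ha₂, hb₁, hb₂, rfl⟩ := UnifCross.exists_eq (by omega) hr
  exact ⟨_, crossing_numerator_mem_Icc hik.le ha₁ ha₂ hb₁ hb₂, rfl⟩

theorem stmt11_general (n i k : ℕ)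
    (h2 : i < k) :
    (∀ r : ℝ × ℝ, UnifCross n i k r →
      r.1 = (i : ℝ) / k ∧
        ∃ j : ℤ, 0 ≤ j ∧ j ≤ (k : ℤ) * n - k ∧ r.2 = (j : ℝ) / k) ∧
    {r : ℝ × ℝ | UnifCross n i k r}.ncard ≤ k * n := by
  refine ⟨fun r hr => ?_, ?_⟩
  · obtain ⟨j, ⟨hj₀, hj₁⟩, rfl⟩ := setOf_unifCross_subset h2 hr
    exact ⟨rfl, j, hj₀, hj₁, rfl⟩
  · calc {r : ℝ × ℝ | UnifCross n i k r}.ncard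
        ≤ ((fun j : ℤ => ((i : ℝ) / k, (j : ℝ) / k)) '' Set.Icc 0 (k * n - k)).ncard :=
          Set.ncard_le_ncard (setOf_unifCross_subset h2) ((Set.finite_Icc _ _).image _)
      _ ≤ (Set.Icc (0 : ℤ) (k * n - k)).ncard := Set.ncard_image_le (Set.finite_Icc _ _)
      _ ≤ k * n := ncard_Icc_zero_mul_sub_le n (by omega)

/-- For coprime `1 ≤ i < k ≤ n/2`, every uniform `(i,k)`-crossing in the regular drawing of
`K_{n,n}` lies on the vertical line `x = i/k` and has y-coordinate `j/k` for some integer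
`0 ≤ j ≤ kn - k`; consequently there are at most `kn` uniform `(i,k)`-crossings. -/
theorem stmt11 (n i k : ℕ) (hn : 2 ≤ n) (hco : Nat.Coprime i k)
    (h1 : 1 ≤ i) (h2 : i < k) (h3 : 2 * k ≤ n) :
    (∀ r : ℝ × ℝ, UnifCross n i k r →
      r.1 = (i : ℝ) / k ∧
        ∃ j : ℤ, 0 ≤ j ∧ j ≤ (k : ℤ) * n - k ∧ r.2 = (j : ℝ) / k) ∧
    {r : ℝ × ℝ | UnifCross n i k r}.ncard ≤ k * n :=
  stmt11_general n i k h2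
end

section
/- Let n ≥ 2 and let i, k be coprime integers with 1 ≤ i < k ≤ n/2. In the regular bipartite drawing of K_{n,n} with unit width and unit steps, at least n² − 2in edges p_{i'}q_{j'} contain a uniform (i,k)-crossing. Specifically, for every edge p_{i'}q_{j'} with i < i' ≤ n − i and 1 ≤ j' ≤ n, either (i'−i, j'+k−i) or (i'+i, j'−k+i) is a valid index pair in {1,…,n}², and the corresponding segment crosses p_{i'}q_{j'} at a uniform (i,k)-crossing. -/
lemma cross_aux (a b a' b' x y : ℝ) (hx : 0 < x) (hxy : x < y)
    (ha : a' = a + x) (hb : b' = b + x - y) :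
    (segment ℝ ((0:ℝ), a) ((1:ℝ), b) ∩ segment ℝ ((0:ℝ), a') ((1:ℝ), b')).Nonempty := by
  have hy : 0 < y := hx.trans hxy
  have ht0 : 0 ≤ x / y := by positivity
  have ht1 : x / y ≤ 1 := by rw [div_le_one hy]; exact hxy.le
  refine ⟨(x / y, (1 - x / y) * a + (x / y) * b), ?_, ?_⟩
  · exact ⟨1 - x / y, x / y, by linarith, ht0, by ring, by
      simp [Prod.ext_iff, Prod.smul_def]⟩
  · refine ⟨1 - x / y, x / y, by linarith, ht0, by ring, ?_⟩
    subst ha hb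
    simp [Prod.ext_iff, Prod.smul_def]
    field_simp
    ring

/-- For coprime `1 ≤ i < k ≤ n/2`, at least `n² - 2in` edges of the regular drawing of
`K_{n,n}` contain a uniform `(i,k)`-crossing; specifically, for every edge `p i' q j'` with
`i < i' ≤ n - i` and `1 ≤ j' ≤ n`, either `(i'-i, j'+k-i)` or `(i'+i, j'-k+i)` is a valid index
pair, and the corresponding segment crosses `p i' q j'`. -/
theorem stmt12 (n i k : ℕ) (hn : 2 ≤ n) (hco : Nat.Coprime i k)
    (h1 : 1 ≤ i) (h2 : i < k) (h3 : 2 * k ≤ n) :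
    (∀ i' j' : ℤ, (i : ℤ) < i' → i' ≤ (n : ℤ) - i → 1 ≤ j' → j' ≤ n →
      ((1 ≤ i' - i ∧ i' - i ≤ n ∧ 1 ≤ j' + k - i ∧ j' + k - i ≤ n ∧
          (segment ℝ ((0 : ℝ), (i' : ℝ) - 1) ((1 : ℝ), (j' : ℝ) - 1) ∩
            segment ℝ ((0 : ℝ), (i' : ℝ) - i - 1) ((1 : ℝ), (j' : ℝ) + k - i - 1)).Nonempty) ∨
        (1 ≤ i' + i ∧ i' + i ≤ n ∧ 1 ≤ j' - k + i ∧ j' - k + i ≤ n ∧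
          (segment ℝ ((0 : ℝ), (i' : ℝ) - 1) ((1 : ℝ), (j' : ℝ) - 1) ∩
            segment ℝ ((0 : ℝ), (i' : ℝ) + i - 1) ((1 : ℝ), (j' : ℝ) - k + i - 1)).Nonempty))) ∧
    (n : ℤ) ^ 2 - 2 * i * n ≤
      ({e : ℤ × ℤ | 1 ≤ e.1 ∧ e.1 ≤ n ∧ 1 ≤ e.2 ∧ e.2 ≤ n ∧
        ∃ a b : ℤ, 1 ≤ a ∧ a + (i : ℤ) ≤ n ∧ (k : ℤ) - i + 1 ≤ b ∧ b ≤ n ∧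
          (e = (a, b) ∨ e = (a + i, b + i - k)) ∧
          (segment ℝ ((0 : ℝ), (a : ℝ) - 1) ((1 : ℝ), (b : ℝ) - 1) ∩
            segment ℝ ((0 : ℝ), (a : ℝ) + i - 1)
              ((1 : ℝ), (b : ℝ) + i - k - 1)).Nonempty}.ncard : ℤ) := by
  have hiZ : (1 : ℤ) ≤ i := by exact_mod_cast h1
  have hikZ : (i : ℤ) < k := by exact_mod_cast h2
  have hknZ : 2 * (k : ℤ) ≤ n := by exact_mod_cast h3
  have hxR : (0 : ℝ) < i := by
    have : (0:ℕ) < i := h1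
    exact_mod_cast this
  have hxyR : (i : ℝ) < k := by exact_mod_cast h2
  constructor
  · intro i' j' hi1 hi2 hj1 hj2
    by_cases hc : j' + k - i ≤ n
    · left
      refine ⟨by omega, by omega, by omega, hc, ?_⟩
      have h := cross_aux ((i':ℝ) - i - 1) ((j':ℝ) + k - i - 1) ((i':ℝ) - 1) ((j':ℝ) - 1)
        i k hxR hxyR (by ring) (by ring)
      rwa [Set.inter_comm] at h
    · right
      exact ⟨by omega, by omega, by omega, by omega,
        cross_aux ((i':ℝ) - 1) ((j':ℝ) - 1) ((i':ℝ) + i - 1) ((j':ℝ) - k + i - 1)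
          i k hxR hxyR (by ring) (by ring)⟩
  · set S : Set (ℤ × ℤ) := {e : ℤ × ℤ | 1 ≤ e.1 ∧ e.1 ≤ n ∧ 1 ≤ e.2 ∧ e.2 ≤ n ∧
        ∃ a b : ℤ, 1 ≤ a ∧ a + (i : ℤ) ≤ n ∧ (k : ℤ) - i + 1 ≤ b ∧ b ≤ n ∧
          (e = (a, b) ∨ e = (a + i, b + i - k)) ∧
          (segment ℝ ((0 : ℝ), (a : ℝ) - 1) ((1 : ℝ), (b : ℝ) - 1) ∩
            segment ℝ ((0 : ℝ), (a : ℝ) + i - 1)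
              ((1 : ℝ), (b : ℝ) + i - k - 1)).Nonempty} with hS
    set T : Finset (ℤ × ℤ) := Finset.Icc ((i:ℤ) + 1) ((n:ℤ) - i) ×ˢ Finset.Icc 1 (n:ℤ) with hT
    have hsub : (↑T : Set (ℤ × ℤ)) ⊆ S := by
      rintro ⟨e1, e2⟩ he
      simp only [hT, Finset.coe_product, Set.mem_prod, Finset.mem_coe, Finset.mem_Icc] at he
      obtain ⟨⟨ha1, ha2⟩, hb1, hb2⟩ := he
      refine ⟨by dsimp; omega, by dsimp; omega, by dsimp; omega, by dsimp; omega, ?_⟩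
      by_cases hc : e2 + k - i ≤ n
      · refine ⟨e1 - i, e2 + k - i, by omega, by omega, by omega, by omega,
          Or.inr (by rw [Prod.mk.injEq]; omega), ?_⟩
        exact cross_aux _ _ _ _ i k hxR hxyR (by ring) (by ring)
      · refine ⟨e1, e2, by omega, by omega, by omega, by omega,
          Or.inl rfl, ?_⟩
        exact cross_aux _ _ _ _ i k hxR hxyR (by ring) (by ring)
    have hfin : S.Finite := by
      apply Set.Finite.subset (Finset.Icc 1 (n:ℤ) ×ˢ Finset.Icc 1 (n:ℤ)).finite_toSet
      rintro ⟨e1, e2⟩ ⟨q1, q2, q3, q4, -⟩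
      simp only [Finset.coe_product, Set.mem_prod, Finset.mem_coe, Finset.mem_Icc]
      exact ⟨⟨q1, q2⟩, q3, q4⟩
    have hle : T.card ≤ S.ncard := by
      rw [← Set.ncard_coe_finset T]
      exact Set.ncard_le_ncard hsub hfin
    have hcard : (T.card : ℤ) = ((n:ℤ) - 2 * i) * n := by
      rw [hT, Finset.card_product, Int.card_Icc, Int.card_Icc]
      push_cast [Int.toNat_of_nonneg (by omega : (0:ℤ) ≤ (n:ℤ) - i + 1 - ((i:ℤ) + 1)),
        Int.toNat_of_nonneg (by omega : (0:ℤ) ≤ (n:ℤ) + 1 - 1)]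
      ring
    calc (n : ℤ) ^ 2 - 2 * i * n = ((n:ℤ) - 2 * i) * n := by ring
      _ = (T.card : ℤ) := hcard.symm
      _ ≤ (S.ncard : ℤ) := by exact_mod_cast hle
end
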